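/- Let q = p^f be a prime power, n ≥ 2, (n,q) ∉ {(2,2),(2,3)}, and let S be a maximal solvable subgroup of ΓL_n(q). If S stabilises a complete flag of subspaces 0 = V_0 < V_1 < ⋯ < V_n = V of V = F_q^n (so each quotient V_i/V_{i−1} has dimension 1), then there exist x, y, z ∈ SL_n(q) such that S ∩ x⁻¹Sx ∩ y⁻¹Sy ∩ z⁻¹Sz ≤ Z(GL_n(q)). -/

import Mathlib

open Matrix

variable (F : Type*) [Field F] [Fintype F] (n : ℕ)

/-- The general linear group `GL_n(F)`, as the unit group of the matrix ring. -/
abbrev GLn := (Matrix (Fin n) (Fin n) F)ˣ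

/-- The action of the Galois group (the group of ring automorphisms of `F`) on `GL_n(F)`,
applying a field automorphism entrywise to matrices. -/
def frobAction : RingAut F →* MulAut (GLn F n) :=
  MonoidHom.mk'
    (fun σ => Units.mapEquiv (RingEquiv.mapMatrix σ : Matrix (Fin n) (Fin n) F ≃+* _).toMulEquiv)
    (by
      intro σ τ
      apply MulEquiv.ext
      intro u
      apply Units.ext
      simp [Matrix.ext_iff.symm, Matrix.map_apply])

/-- `ΓL_n(F) = GL_n(F) ⋊ Gal`, the group of invertible semilinear transformations of
`F^n`, presented (with respect to the standard basis) as the semidirect product of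
`GL_n(F)` with the group of field automorphisms of `F`. -/
abbrev GammaL := GLn F n ⋊[frobAction F n] RingAut F

variable {F n}

/-- The natural (semilinear) action of `ΓL_n(F)` on `V = F^n`: the element `⟨m, σ⟩`
sends `v` to `m *ᵥ (σ ∘ v)`. -/
def gamAct (g : GammaL F n) (v : Fin n → F) : Fin n → F :=
  (g.left : Matrix (Fin n) (Fin n) F) *ᵥ fun i => g.right (v i)

variable (F n)

/-- The subgroup of scalar matrices `Z(GL_n(q))`. -/
def Zsub : Subgroup (GLn F n) :=
  (Units.map ((Matrix.scalar (Fin n) : F →+* Matrix (Fin n) (Fin n) F)).toMonoidHom).range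

/-- The copy of `Z(GL_n(q))` inside `ΓL_n(q)`. -/
def ZGamma : Subgroup (GammaL F n) :=
  (Zsub F n).map (SemidirectProduct.inl : GLn F n →* GammaL F n)

/-- The copy of `GL_n(q)` inside `ΓL_n(q)`. -/
def GLGamma : Subgroup (GammaL F n) :=
  (SemidirectProduct.inl : GLn F n →* GammaL F n).range

/-- The copy of `SL_n(q)` inside `ΓL_n(q)`. -/
def SLGamma : Subgroup (GammaL F n) :=
  ((Units.map (Matrix.detMonoidHom : Matrix (Fin n) (Fin n) F →* F)).ker).map
    (SemidirectProduct.inl : GLn F n →* GammaL F n)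

set_option linter.unusedSectionVars false in
lemma frobAction_scalar (σ : RingAut F) (c : Fˣ) :
    (frobAction F n σ)
        ((Units.map ((Matrix.scalar (Fin n) : F →+* Matrix (Fin n) (Fin n) F)).toMonoidHom) c) =
      (Units.map ((Matrix.scalar (Fin n) : F →+* Matrix (Fin n) (Fin n) F)).toMonoidHom)
        ((Units.map σ.toRingHom.toMonoidHom) c) := by
  apply Units.ext
  simp [frobAction, Matrix.ext_iff.symm, Matrix.map_apply, Matrix.scalar_apply,
    Matrix.diagonal_apply]

instance ZGamma_normal : (ZGamma F n).Normal := by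
  constructor
  rintro x hx g
  obtain ⟨z, hz, rfl⟩ := hx
  obtain ⟨c, rfl⟩ := hz
  refine ⟨(Units.map ((Matrix.scalar (Fin n) : F →+* Matrix (Fin n) (Fin n) F)).toMonoidHom)
      ((Units.map (g.right : RingAut F).toRingHom.toMonoidHom) c), ⟨_, rfl⟩, ?_⟩
  have hconj : g * SemidirectProduct.inl
        ((Units.map ((Matrix.scalar (Fin n) : F →+* Matrix (Fin n) (Fin n) F)).toMonoidHom) c) * g⁻¹ =
      SemidirectProduct.inl (g.left * frobAction F n g.right
        ((Units.map ((Matrix.scalar (Fin n) : F →+* Matrix (Fin n) (Fin n) F)).toMonoidHom) c) *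
          g.left⁻¹) := by
    refine SemidirectProduct.ext ?_ (by simp)
    simp [mul_assoc]
  rw [hconj, frobAction_scalar]
  congr 1
  have hcomm : Commute
      ((Units.map ((Matrix.scalar (Fin n) : F →+* Matrix (Fin n) (Fin n) F)).toMonoidHom)
        ((Units.map (g.right : RingAut F).toRingHom.toMonoidHom) c)) g.left := by
    apply Units.ext
    push_cast [Units.val_mul]
    exact (Matrix.scalar_commute _ (fun r' => Commute.all _ _) _)
  rw [← hcomm.eq, mul_assoc, mul_inv_cancel, mul_one]

/-- The conjugate `H^g = g⁻¹ H g` of a subgroup. -/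
def conjS {G : Type*} [Group G] (H : Subgroup G) (g : G) : Subgroup G :=
  H.comap (MulAut.conj g).toMonoidHom

section Aux
set_option linter.unusedSectionVars false
variable {F : Type*} [Field F] [Fintype F] {n : ℕ}

lemma frob_val (σ : RingAut F) (u : GLn F n) :
    ((frobAction F n σ u : GLn F n) : Matrix (Fin n) (Fin n) F) = (u : Matrix (Fin n) (Fin n) F).map σ := rfl

lemma sigma_mulVec (σ : RingAut F) (M : Matrix (Fin n) (Fin n) F) (w : Fin n → F) :
    (fun i => σ ((M *ᵥ w) i)) = (M.map σ) *ᵥ (fun i => σ (w i)) := by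
  funext i
  simp [Matrix.mulVec, dotProduct, map_sum, Matrix.map_apply]

lemma gamAct_mul (a b : GammaL F n) (v : Fin n → F) :
    gamAct (a * b) v = gamAct a (gamAct b v) := by
  show ((a*b).left : Matrix (Fin n) (Fin n) F) *ᵥ (fun i => (a*b).right (v i))
      = (a.left : Matrix (Fin n) (Fin n) F) *ᵥ (fun i => a.right ((gamAct b) v i))
  rw [SemidirectProduct.mul_left, SemidirectProduct.mul_right]
  have : (fun i => a.right (gamAct b v i)) =
      ((b.left : Matrix (Fin n) (Fin n) F).map a.right) *ᵥ (fun i => a.right (b.right (v i))) := by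
    rw [show (fun i => a.right (gamAct b v i)) = (fun i => a.right ((((b.left : Matrix (Fin n) (Fin n) F)) *ᵥ fun j => b.right (v j)) i)) from rfl, sigma_mulVec]
  rw [this, Matrix.mulVec_mulVec]
  congr 1

lemma gamAct_one (v : Fin n → F) : gamAct (1 : GammaL F n) v = v := by
  show ((1 : GLn F n) : Matrix (Fin n) (Fin n) F) *ᵥ (fun i => (1 : RingAut F) (v i)) = v
  simp [Matrix.one_mulVec]

lemma gamAct_inl (u : GLn F n) (v : Fin n → F) :
    gamAct (SemidirectProduct.inl u : GammaL F n) v = (u : Matrix (Fin n) (Fin n) F) *ᵥ v := rfl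

lemma gamAct_inj (g : GammaL F n) : Function.Injective (gamAct g) := by
  intro v w h
  have := congrArg (gamAct g⁻¹) h
  rwa [← gamAct_mul, ← gamAct_mul, inv_mul_cancel, gamAct_one, gamAct_one] at this

lemma gamAct_add (g : GammaL F n) (v w : Fin n → F) :
    gamAct g (v + w) = gamAct g v + gamAct g w := by
  show (g.left : Matrix (Fin n) (Fin n) F) *ᵥ (fun i => g.right ((v+w) i)) = _
  rw [show (fun i => g.right ((v+w) i)) = (fun i => g.right (v i)) + (fun i => g.right (w i)) by
    funext i; simp [map_add]]
  rw [Matrix.mulVec_add]; rfl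

lemma gamAct_zero (g : GammaL F n) : gamAct g 0 = 0 := by
  show (g.left : Matrix (Fin n) (Fin n) F) *ᵥ (fun i => g.right ((0 : Fin n → F) i)) = 0
  rw [show (fun i => g.right ((0 : Fin n → F) i)) = (0 : Fin n → F) by funext i; simp]
  exact Matrix.mulVec_zero _

lemma gamAct_smul (g : GammaL F n) (c : F) (v : Fin n → F) :
    gamAct g (c • v) = g.right c • gamAct g v := by
  show (g.left : Matrix (Fin n) (Fin n) F) *ᵥ (fun i => g.right ((c • v) i)) = _
  rw [show (fun i => g.right ((c • v) i)) = g.right c • (fun i => g.right (v i)) by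
    funext i; simp [_root_.map_mul, Pi.smul_apply, smul_eq_mul]]
  rw [Matrix.mulVec_smul]; rfl

/-- `gamAct g` as an additive monoid hom. -/
def gamActHom (g : GammaL F n) : (Fin n → F) →+ (Fin n → F) where
  toFun := gamAct g
  map_zero' := gamAct_zero g
  map_add' := gamAct_add g

end Aux
section Aux2
set_option linter.unusedSectionVars false
variable {F : Type*} [Field F] [Fintype F] {n : ℕ}

lemma exists_SL_basis_change (hn : 0 < n) (e f : Module.Basis (Fin n) F (Fin n → F)) :
    ∃ u : GLn F n, ((u : Matrix (Fin n) (Fin n) F)).det = 1 ∧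
      ∀ (s : Set (Fin n)) (v : Fin n → F),
        ((u : Matrix (Fin n) (Fin n) F) *ᵥ v ∈ Submodule.span F (e '' s) ↔
          v ∈ Submodule.span F (f '' s)) := by
  classical
  set φ0 : (Fin n → F) ≃ₗ[F] (Fin n → F) := f.equiv e (Equiv.refl _) with hφ0
  obtain ⟨cu, hcu⟩ := LinearEquiv.isUnit_det' φ0
  set δ : Fin n → Fˣ := fun j => if j = ⟨0, hn⟩ then cu⁻¹ else 1 with hδ
  set e' : Module.Basis (Fin n) F (Fin n → F) := e.unitsSMul δ with he'
  set φ : (Fin n → F) ≃ₗ[F] (Fin n → F) := f.equiv e' (Equiv.refl _) with hφ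
  set s0 : (Fin n → F) ≃ₗ[F] (Fin n → F) := e.equiv e' (Equiv.refl _) with hs0
  have hcomp : (φ : (Fin n → F) →ₗ[F] (Fin n → F)) =
      (s0 : (Fin n → F) →ₗ[F] (Fin n → F)) ∘ₗ (φ0 : (Fin n → F) →ₗ[F] (Fin n → F)) := by
    apply f.ext
    intro j
    simp [hφ, hφ0, hs0, Module.Basis.equiv_apply]
  have hdets0 : LinearMap.det (s0 : (Fin n → F) →ₗ[F] (Fin n → F)) = ((cu⁻¹ : Fˣ) : F) := by
    rw [← LinearMap.det_toMatrix e]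
    have : LinearMap.toMatrix e e (s0 : (Fin n → F) →ₗ[F] (Fin n → F)) =
        Matrix.diagonal (fun j => ((δ j : Fˣ) : F)) := by
      ext i j
      rw [LinearMap.toMatrix_apply]
      have h1 : (s0 : (Fin n → F) →ₗ[F] (Fin n → F)) (e j) = (δ j : F) • e j := by
        simp [hs0, Module.Basis.equiv_apply, he', Module.Basis.unitsSMul_apply, Units.smul_def]
      rw [h1, _root_.map_smul, Module.Basis.repr_self, Matrix.diagonal_apply]
      simp only [Finsupp.single_apply, eq_comm]
      rcases eq_or_ne i j with rfl | hij
      · simp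
      · simp [hij, Ne.symm hij]
    rw [this, Matrix.det_diagonal]
    have h2 : ∀ j : Fin n, ((δ j : Fˣ) : F) = if j = ⟨0, hn⟩ then ((cu⁻¹ : Fˣ) : F) else 1 := by
      intro j
      simp [hδ, apply_ite (Units.val)]
    rw [Finset.prod_congr rfl (fun j _ => h2 j), Finset.prod_ite_eq']
    simp
  have hdet : LinearMap.det (φ : (Fin n → F) →ₗ[F] (Fin n → F)) = 1 := by
    rw [hcomp, LinearMap.det_comp, hdets0, ← hcu]
    exact_mod_cast Units.inv_mul cu
  refine ⟨⟨LinearMap.toMatrix' (φ : (Fin n → F) →ₗ[F] (Fin n → F)),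
      LinearMap.toMatrix' (φ.symm : (Fin n → F) →ₗ[F] (Fin n → F)), ?_, ?_⟩, ?_, ?_⟩
  · rw [← LinearMap.toMatrix'_comp]
    rw [show (φ : (Fin n → F) →ₗ[F] (Fin n → F)) ∘ₗ (φ.symm : (Fin n → F) →ₗ[F] (Fin n → F))
        = LinearMap.id from LinearMap.ext fun v => φ.apply_symm_apply v]
    exact LinearMap.toMatrix'_id
  · rw [← LinearMap.toMatrix'_comp]
    rw [show (φ.symm : (Fin n → F) →ₗ[F] (Fin n → F)) ∘ₗ (φ : (Fin n → F) →ₗ[F] (Fin n → F))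
        = LinearMap.id from LinearMap.ext fun v => φ.symm_apply_apply v]
    exact LinearMap.toMatrix'_id
  · show (LinearMap.toMatrix' (φ : (Fin n → F) →ₗ[F] (Fin n → F))).det = 1
    rw [LinearMap.det_toMatrix']
    exact hdet
  · intro s v
    show LinearMap.toMatrix' (φ : (Fin n → F) →ₗ[F] (Fin n → F)) *ᵥ v ∈ _ ↔ _
    have hXv : LinearMap.toMatrix' (φ : (Fin n → F) →ₗ[F] (Fin n → F)) *ᵥ v = φ v := by
      rw [← Matrix.toLin'_apply, Matrix.toLin'_toMatrix']
      rfl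
    rw [hXv]
    have hspan : Submodule.span F (e '' s) = Submodule.span F (e' '' s) := by
      apply le_antisymm
      · rw [Submodule.span_le]
        rintro x ⟨j, hj, rfl⟩
        have : e j = ((δ j)⁻¹ : Fˣ) • e' j := by
          simp [he', Module.Basis.unitsSMul_apply, Units.smul_def, smul_smul]
        rw [this]
        exact Submodule.smul_mem _ _ (Submodule.subset_span ⟨j, hj, rfl⟩)
      · rw [Submodule.span_le]
        rintro x ⟨j, hj, rfl⟩
        have : e' j = (δ j : F) • e j := by
          simp [he', Module.Basis.unitsSMul_apply, Units.smul_def]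
        rw [this]
        exact Submodule.smul_mem _ _ (Submodule.subset_span ⟨j, hj, rfl⟩)
    have hmap : Submodule.span F (e' '' s) =
        Submodule.map (φ : (Fin n → F) →ₗ[F] (Fin n → F)) (Submodule.span F (f '' s)) := by
      rw [Submodule.map_span, ← Set.image_comp]
      congr 1
      apply Set.image_congr
      intro j _
      simp [hφ, Module.Basis.equiv_apply]
    rw [hspan, hmap]
    constructor
    · rintro ⟨y, hy, hyv⟩
      rwa [← φ.injective hyv]
    · intro hv
      exact ⟨v, hv, rfl⟩
end Aux2
section Aux3
set_option linter.unusedSectionVars false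
variable {F : Type*} [Field F] [Fintype F] {n : ℕ}

lemma repr_vanish {ι M : Type*} [AddCommGroup M] [Module F M] (b : Module.Basis ι F M) (s : Set ι)
    {x : M} (hx : x ∈ Submodule.span F (b '' s)) {k : ι} (hk : k ∉ s) : b.repr x k = 0 := by
  induction hx using Submodule.span_induction with
  | mem y hy =>
    obtain ⟨l, hl, rfl⟩ := hy
    rw [Module.Basis.repr_self]
    exact Finsupp.single_eq_of_ne (fun h => hk (h ▸ hl))
  | zero => simp
  | add y z _ _ hy hz => simp [map_add, hy, hz]
  | smul c y _ hy => simp [hy]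
end Aux3
section Aux4
set_option linter.unusedSectionVars false
variable {F : Type*} [Field F] [Fintype F] {n : ℕ}

lemma span_insert_line (hn : 0 < n) (e : Fin n → (Fin n → F))
    (hspan : ⊤ ≤ Submodule.span F (Set.range e)) (c : Fin n → F)
    (hc : c ⟨n - 1, by omega⟩ ≠ 0) :
    ⊤ ≤ Submodule.span F (Set.range (fun j : Fin n =>
      if (j : ℕ) = 0 then ∑ k : Fin n, c k • e k else e ⟨(j : ℕ) - 1, by omega⟩)) := by
  classical
  set g : Fin n → (Fin n → F) := fun j : Fin n =>
    if (j : ℕ) = 0 then ∑ k : Fin n, c k • e k else e ⟨(j : ℕ) - 1, by omega⟩ with hg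
  set L := Submodule.span F (Set.range g) with hL
  have hsmall : ∀ k : Fin n, (k : ℕ) < n - 1 → e k ∈ L := by
    intro k hk
    have : g ⟨(k : ℕ) + 1, by omega⟩ = e k := by
      have h1 : ¬(((⟨(k : ℕ) + 1, by omega⟩ : Fin n) : ℕ) = 0) := by simp
      rw [hg]
      simp only [h1, if_false]
      congr 1
    rw [← this]
    exact Submodule.subset_span ⟨_, rfl⟩
  have hall : ∀ k : Fin n, e k ∈ L := by
    intro k
    rcases lt_or_ge (k : ℕ) (n - 1) with hk | hk
    · exact hsmall k hk
    · have hkeq : k = ⟨n - 1, by omega⟩ := Fin.ext (show (k : ℕ) = n - 1 by have := k.isLt; omega)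
      have hv : (∑ k : Fin n, c k • e k) ∈ L := by
        have : g ⟨0, hn⟩ = ∑ k : Fin n, c k • e k := by rw [hg]; exact if_pos rfl
        rw [← this]
        exact Submodule.subset_span ⟨_, rfl⟩
      have hsum : (∑ j ∈ Finset.univ.erase k, c j • e j) ∈ L := by
        apply Submodule.sum_mem
        intro j hj
        have hjk : (j : ℕ) ≠ (k : ℕ) := fun h => (Finset.mem_erase.mp hj).1 (Fin.ext h)
        have hkval : (k : ℕ) = n - 1 := by have := k.isLt; omega
        have : (j : ℕ) < n - 1 := by have := j.isLt; omega
        exact Submodule.smul_mem _ _ (hsmall j this)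
      have hck : c k • e k = (∑ k : Fin n, c k • e k) - ∑ j ∈ Finset.univ.erase k, c j • e j := by
        rw [← Finset.add_sum_erase Finset.univ _ (Finset.mem_univ k)]
        ring
      have hmem : c k • e k ∈ L := by
        rw [hck]
        exact Submodule.sub_mem _ hv hsum
      have : e k = (c k)⁻¹ • (c k • e k) := by
        rw [smul_smul, inv_mul_cancel₀ (hkeq ▸ hc), one_smul]
      rw [this]
      exact Submodule.smul_mem _ _ hmem
  refine le_trans hspan (Submodule.span_le.mpr ?_)
  rintro x ⟨k, rfl⟩
  exact hall k
end Aux4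
/-- Let `q = p^f`, `n ≥ 2`, `(n,q) ∉ {(2,2),(2,3)}`, and let `S` be a
maximal solvable subgroup of `ΓL_n(q)` stabilising a complete flag
`0 = V_0 < V_1 < ⋯ < V_n = V` of `V = F_q^n`.  Then there exist `x, y, z ∈ SL_n(q)` with
`S ∩ x⁻¹Sx ∩ y⁻¹Sy ∩ z⁻¹Sz ≤ Z(GL_n(q))`. -/
theorem maxSolvable_flag_stabilizer {F : Type*} [Field F] [Fintype F] {n : ℕ}
    (hn : 2 ≤ n)
    (h22 : ¬(n = 2 ∧ Fintype.card F = 2)) (h23 : ¬(n = 2 ∧ Fintype.card F = 3))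
    (S : Subgroup (GammaL F n)) (hsolv : IsSolvable S)
    (hmax : ∀ K : Subgroup (GammaL F n), IsSolvable K → S ≤ K → S = K)
    (Vs : Fin (n + 1) → Submodule F (Fin n → F))
    (h0 : Vs 0 = ⊥) (hlast : Vs (Fin.last n) = ⊤)
    (hchain : ∀ i : Fin n, Vs i.castSucc < Vs i.succ)
    (hdim : ∀ i : Fin n,
      Module.finrank F (Vs i.succ) = Module.finrank F (Vs i.castSucc) + 1)
    (hstab : ∀ i : Fin (n + 1), ∀ g ∈ S, ∀ v ∈ Vs i, gamAct g v ∈ Vs i) :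
    ∃ x ∈ SLGamma F n, ∃ y ∈ SLGamma F n, ∃ z ∈ SLGamma F n,
      S ⊓ conjS S x ⊓ conjS S y ⊓ conjS S z ≤ ZGamma F n := by
  classical
  -- finrank of flag members
  have hfr : ∀ i : Fin (n+1), Module.finrank F (Vs i) = (i : ℕ) := by
    intro i
    induction i using Fin.induction with
    | zero => rw [h0]; simp
    | succ i ih => rw [hdim i, ih]; simp
  -- the flag is monotone
  have hVmono : Monotone Vs := (Fin.strictMono_iff_lt_succ.mpr hchain).monotone
  -- choose an adapted family of vectors
  have hex : ∀ i : Fin n, ∃ v, v ∈ Vs i.succ ∧ v ∉ Vs i.castSucc := by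
    intro i
    obtain ⟨v, hv1, hv2⟩ := SetLike.exists_of_lt (hchain i)
    exact ⟨v, hv1, hv2⟩
  choose e he1 he2 using hex
  set E : ℕ → Submodule F (Fin n → F) :=
    fun i => Submodule.span F (e '' {j : Fin n | (j : ℕ) < i}) with hE
  have hVsE : ∀ i : Fin (n+1), Vs i = E (i : ℕ) := by
    intro i
    induction i using Fin.induction with
    | zero =>
      rw [h0]
      have himg : (e '' {j : Fin n | (j : ℕ) < 0}) = ∅ := by ext x; simp
      simp [hE, himg]
    | succ i ih =>
      rw [Fin.coe_castSucc] at ih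
      have hsub : E ((i : ℕ) + 1) ≤ Vs i.succ := by
        rw [hE, Submodule.span_le]
        rintro x ⟨j, hj, rfl⟩
        have hji : j.succ ≤ i.succ := by
          simp only [Set.mem_setOf_eq] at hj
          rw [Fin.succ_le_succ_iff, Fin.le_def]
          omega
        exact hVmono hji (he1 j)
      have hlt : E (i : ℕ) < E ((i : ℕ) + 1) := by
        apply lt_of_le_of_ne
        · exact Submodule.span_mono (Set.image_mono (fun j hj => by
            simp only [Set.mem_setOf_eq] at hj ⊢; omega))
        · intro h
          apply he2 i
          rw [ih, h]
          exact Submodule.subset_span ⟨i, by simp, rfl⟩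
      have h1 : Module.finrank F (E (i : ℕ)) = (i : ℕ) := by
        rw [← ih, hfr]
        simp
      have h2 : (i : ℕ) + 1 ≤ Module.finrank F (E ((i : ℕ) + 1)) := by
        have := Submodule.finrank_lt_finrank_of_lt hlt
        omega
      have h3 : Module.finrank F (Vs i.succ) ≤ (i : ℕ) + 1 := by
        rw [hfr]
        simp
      exact (Submodule.eq_of_le_of_finrank_le hsub (le_trans h3 h2)).symm
  -- the adapted family spans
  have h0n : 0 < n := by omega
  have hspan_top : ⊤ ≤ Submodule.span F (Set.range e) := by
    have h1 : Vs (Fin.last n) = Submodule.span F (Set.range e) := by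
      rw [hVsE (Fin.last n)]
      have : {j : Fin n | (j : ℕ) < ((Fin.last n : Fin (n+1)) : ℕ)} = Set.univ := by
        ext j; simp [Fin.val_last, j.isLt]
      rw [hE]
      simp only [this, Set.image_univ]
    rw [← h1, hlast]
  have hcard : Fintype.card (Fin n) = Module.finrank F (Fin n → F) := by
    simp [Module.finrank_fin_fun]
  set eB : Module.Basis (Fin n) F (Fin n → F) :=
    basisOfTopLeSpanOfCardEqFinrank e hspan_top hcard with heBdef
  have heB : ∀ j, eB j = e j := fun j => by
    rw [heBdef, coe_basisOfTopLeSpanOfCardEqFinrank]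
  -- span of eB-image equals span of e-image
  have heBimg : ∀ s : Set (Fin n), eB '' s = e '' s := by
    intro s
    apply Set.image_congr
    intro j _
    exact heB j
  -- distinguished indices
  set j0 : Fin n := ⟨0, h0n⟩ with hj0
  set j1 : Fin n := ⟨1, by omega⟩ with hj1
  -- generator of the multiplicative group
  obtain ⟨α, hα⟩ := IsCyclic.exists_generator (α := Fˣ)
  -- special vectors
  set w : Fin n → F := ∑ j : Fin n, (1 : F) • e j with hw
  set vv : Fin n → F := ∑ j : Fin n, ((α : F) ^ (j : ℕ)) • e j with hvv
  -- the three auxiliary bases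
  set fRev : Module.Basis (Fin n) F (Fin n → F) := eB.reindex Fin.revPerm with hfRevdef
  have hfRev : ∀ j, fRev j = e (Fin.rev j) := by
    intro j
    rw [hfRevdef, Module.Basis.reindex_apply, heB]
    congr 1
  have hWtop : ⊤ ≤ Submodule.span F (Set.range (fun j : Fin n =>
      if (j : ℕ) = 0 then w else e ⟨(j : ℕ) - 1, by omega⟩)) := by
    rw [hw]
    exact span_insert_line h0n e hspan_top (fun _ => (1 : F)) one_ne_zero
  set fW : Module.Basis (Fin n) F (Fin n → F) :=
    basisOfTopLeSpanOfCardEqFinrank _ hWtop hcard with hfWdef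
  have hfW0 : fW j0 = w := by
    rw [hfWdef, coe_basisOfTopLeSpanOfCardEqFinrank]
    exact if_pos rfl
  have hVtop : ⊤ ≤ Submodule.span F (Set.range (fun j : Fin n =>
      if (j : ℕ) = 0 then vv else e ⟨(j : ℕ) - 1, by omega⟩)) := by
    rw [hvv]
    exact span_insert_line h0n e hspan_top (fun k => (α : F) ^ (k : ℕ))
      (pow_ne_zero _ (Units.ne_zero α))
  set fV : Module.Basis (Fin n) F (Fin n → F) :=
    basisOfTopLeSpanOfCardEqFinrank _ hVtop hcard with hfVdef
  have hfV0 : fV j0 = vv := by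
    rw [hfVdef, coe_basisOfTopLeSpanOfCardEqFinrank]
    exact if_pos rfl
  -- the three SL conjugators
  obtain ⟨u1, hu1det, hu1⟩ := exists_SL_basis_change h0n eB fRev
  obtain ⟨u2, hu2det, hu2⟩ := exists_SL_basis_change h0n eB fW
  obtain ⟨u3, hu3det, hu3⟩ := exists_SL_basis_change h0n eB fV
  have hSL : ∀ u : GLn F n, ((u : Matrix (Fin n) (Fin n) F)).det = 1 →
      (SemidirectProduct.inl u : GammaL F n) ∈ SLGamma F n := by
    intro u hu
    refine ⟨u, MonoidHom.mem_ker.mpr ?_, rfl⟩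
    apply Units.ext
    simpa using hu
  refine ⟨SemidirectProduct.inl u1, hSL u1 hu1det, SemidirectProduct.inl u2, hSL u2 hu2det,
    SemidirectProduct.inl u3, hSL u3 hu3det, ?_⟩
  intro g hg
  obtain ⟨⟨⟨hgS, hg1⟩, hg2⟩, hg3⟩ := hg
  have hg1' : (SemidirectProduct.inl u1 : GammaL F n) * g *
      (SemidirectProduct.inl u1 : GammaL F n)⁻¹ ∈ S := by
    simpa [MulAut.conj_apply] using Subgroup.mem_comap.mp hg1
  have hg2' : (SemidirectProduct.inl u2 : GammaL F n) * g *
      (SemidirectProduct.inl u2 : GammaL F n)⁻¹ ∈ S := by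
    simpa [MulAut.conj_apply] using Subgroup.mem_comap.mp hg2
  have hg3' : (SemidirectProduct.inl u3 : GammaL F n) * g *
      (SemidirectProduct.inl u3 : GammaL F n)⁻¹ ∈ S := by
    simpa [MulAut.conj_apply] using Subgroup.mem_comap.mp hg3
  -- stabilisation facts
  have stabC : ∀ (u : GLn F n),
      ((SemidirectProduct.inl u : GammaL F n) * g * (SemidirectProduct.inl u : GammaL F n)⁻¹ ∈ S) →
      ∀ (i : Fin (n+1)) (v : Fin n → F),
        (u : Matrix (Fin n) (Fin n) F) *ᵥ v ∈ Vs i →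
        (u : Matrix (Fin n) (Fin n) F) *ᵥ (gamAct g v) ∈ Vs i := by
    intro u hu i v hv
    have h1 : (u : Matrix (Fin n) (Fin n) F) *ᵥ (gamAct g v)
        = gamAct ((SemidirectProduct.inl u : GammaL F n) * g) v := by
      rw [gamAct_mul, gamAct_inl]
    rw [h1, show (SemidirectProduct.inl u : GammaL F n) * g
        = ((SemidirectProduct.inl u : GammaL F n) * g * (SemidirectProduct.inl u : GammaL F n)⁻¹)
          * (SemidirectProduct.inl u : GammaL F n) by group, gamAct_mul, gamAct_inl]
    exact hstab i _ hu _ hv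
  set d : Fin n → F := fun j => eB.repr (gamAct g (e j)) j with hd
  have hgej : ∀ j : Fin n, gamAct g (e j) = d j • e j := by
    intro j
    have hA : gamAct g (e j) ∈ Submodule.span F (e '' {k : Fin n | (k : ℕ) < (j : ℕ) + 1}) := by
      have h1 : gamAct g (e j) ∈ Vs j.succ := hstab j.succ g hgS _ (he1 j)
      rw [hVsE j.succ] at h1
      simpa [hE, Fin.val_succ] using h1
    have hB : gamAct g (e j) ∈ Submodule.span F (e '' {k : Fin n | (j : ℕ) ≤ (k : ℕ)}) := by
      set iR : Fin (n+1) := ⟨n - (j : ℕ), by omega⟩ with hiR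
      have hsetR : ⇑fRev '' {k : Fin n | (k : ℕ) < n - (j : ℕ)}
          = e '' {k : Fin n | (j : ℕ) ≤ (k : ℕ)} := by
        ext x
        constructor
        · rintro ⟨l, hl, rfl⟩
          refine ⟨Fin.rev l, ?_, (hfRev l).symm⟩
          simp only [Set.mem_setOf_eq] at hl ⊢
          rw [Fin.val_rev]
          have := l.isLt
          omega
        · rintro ⟨k, hk, rfl⟩
          refine ⟨Fin.rev k, ?_, ?_⟩
          · simp only [Set.mem_setOf_eq] at hk ⊢
            rw [Fin.val_rev]
            have := k.isLt
            omega
          · rw [hfRev, Fin.rev_rev]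
      have hVsiR : Vs iR = Submodule.span F (⇑eB '' {k : Fin n | (k : ℕ) < n - (j : ℕ)}) := by
        rw [hVsE iR]
        simp only [hE, heBimg]
        rfl
      have hin : (u1 : Matrix (Fin n) (Fin n) F) *ᵥ (e j) ∈ Vs iR := by
        rw [hVsiR]
        apply (hu1 _ _).mpr
        rw [hsetR]
        refine Submodule.subset_span ⟨j, ?_, rfl⟩
        simp only [Set.mem_setOf_eq]
        omega
      have hstep := stabC u1 hg1' iR (e j) hin
      rw [hVsiR] at hstep
      have h2 := (hu1 _ _).mp hstep
      rwa [hsetR] at h2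
    conv_lhs => rw [← eB.sum_repr (gamAct g (e j))]
    rw [Finset.sum_eq_single j]
    · rw [heB, hd]
    · intro k _ hkj
      rcases lt_or_ge (k : ℕ) (j : ℕ) with hlt | hge
      · have hz : eB.repr (gamAct g (e j)) k = 0 := by
          apply repr_vanish eB {k : Fin n | (j : ℕ) ≤ (k : ℕ)} (by rwa [heBimg])
          simp only [Set.mem_setOf_eq]
          omega
        rw [hz, zero_smul]
      · have hkj' : (k : ℕ) ≠ (j : ℕ) := fun h => hkj (Fin.ext h)
        have hz : eB.repr (gamAct g (e j)) k = 0 := by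
          apply repr_vanish eB {k : Fin n | (k : ℕ) < (j : ℕ) + 1} (by rwa [heBimg])
          simp only [Set.mem_setOf_eq]
          omega
        rw [hz, zero_smul]
    · intro h
      exact absurd (Finset.mem_univ j) h
  -- coordinates of combinations
  have hrepr_sum : ∀ (c : Fin n → F) (k : Fin n), eB.repr (∑ j : Fin n, c j • e j) k = c k := by
    intro c k
    have h1 : (∑ j : Fin n, c j • e j) = ∑ j : Fin n, c j • eB j :=
      Finset.sum_congr rfl (fun j _ => by rw [heB])
    rw [h1]
    exact congrFun (eB.repr_sum_self c) k
  -- stabilised lines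
  have hVs1 : Vs ⟨1, by omega⟩ = Submodule.span F (⇑eB '' {k : Fin n | (k : ℕ) < 1}) := by
    rw [hVsE ⟨1, by omega⟩]
    simp only [hE, heBimg]
  have hset1 : {k : Fin n | (k : ℕ) < 1} = ({j0} : Set (Fin n)) := by
    ext k
    simp only [Set.mem_setOf_eq, Set.mem_singleton_iff, hj0, Fin.ext_iff]
    omega
  have lineStab : ∀ (u : GLn F n) (fB : Module.Basis (Fin n) F (Fin n → F)),
      ((SemidirectProduct.inl u : GammaL F n) * g *
        (SemidirectProduct.inl u : GammaL F n)⁻¹ ∈ S) →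
      (∀ (s : Set (Fin n)) (v : Fin n → F),
        (u : Matrix (Fin n) (Fin n) F) *ᵥ v ∈ Submodule.span F (⇑eB '' s) ↔
          v ∈ Submodule.span F (⇑fB '' s)) →
      gamAct g (fB j0) ∈ Submodule.span F {fB j0} := by
    intro u fB hu' hiff
    have h1 : (u : Matrix (Fin n) (Fin n) F) *ᵥ (fB j0) ∈ Vs ⟨1, by omega⟩ := by
      rw [hVs1]
      apply (hiff _ _).mpr
      rw [hset1, Set.image_singleton]
      exact Submodule.subset_span rfl
    have h2 := stabC u hu' ⟨1, by omega⟩ (fB j0) h1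
    rw [hVs1] at h2
    have h3 := (hiff _ _).mp h2
    rwa [hset1, Set.image_singleton] at h3
  have hw1 : gamAct g w ∈ Submodule.span F {w} := by
    have h := lineStab u2 fW hg2' hu2
    rwa [hfW0] at h
  obtain ⟨μ, hμ⟩ := Submodule.mem_span_singleton.mp hw1
  have hv1 : gamAct g vv ∈ Submodule.span F {vv} := by
    have h := lineStab u3 fV hg3' hu3
    rwa [hfV0] at h
  obtain ⟨ν, hν⟩ := Submodule.mem_span_singleton.mp hv1
  -- expanding the action on combinations
  have key : ∀ c : Fin n → F, gamAct g (∑ j : Fin n, c j • e j)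
      = ∑ j : Fin n, (g.right (c j) * d j) • e j := by
    intro c
    show (gamActHom g) (∑ j : Fin n, c j • e j) = _
    rw [map_sum]
    apply Finset.sum_congr rfl
    intro j _
    show gamAct g (c j • e j) = _
    rw [gamAct_smul, hgej j, smul_smul]
  -- all diagonal entries equal μ
  have hdμ : ∀ k : Fin n, d k = μ := by
    intro k
    have hL : eB.repr (gamAct g w) k = d k := by
      rw [hw, key (fun _ => (1 : F))]
      rw [hrepr_sum (fun j => g.right 1 * d j) k]
      simp
    have hR : eB.repr (μ • w) k = μ := by
      have h1 : μ • w = ∑ j : Fin n, (μ * 1) • e j := by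
        rw [hw, Finset.smul_sum]
        apply Finset.sum_congr rfl
        intro j _
        rw [smul_smul]
      rw [h1, hrepr_sum (fun _ => μ * 1) k, mul_one]
    rw [hμ] at hR
    rw [hL] at hR
    exact hR
  -- nonvanishing of μ
  have hwne : w ≠ 0 := by
    intro h
    have h1 := hrepr_sum (fun _ => (1 : F)) j0
    rw [← hw, h] at h1
    simp at h1
  have hμ0 : μ ≠ 0 := by
    intro h
    rw [h, zero_smul] at hμ
    exact hwne (gamAct_inj g (show gamAct g w = gamAct g 0 by rw [gamAct_zero]; exact hμ.symm))
  -- coordinates of the vv-line relation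
  have hvrel : ∀ k : Fin n, g.right ((α : F) ^ (k : ℕ)) * d k = ν * (α : F) ^ (k : ℕ) := by
    intro k
    have hL : eB.repr (gamAct g vv) k = g.right ((α : F) ^ (k : ℕ)) * d k := by
      rw [hvv, key (fun j => (α : F) ^ (j : ℕ))]
      exact hrepr_sum (fun j => g.right ((α : F) ^ (j : ℕ)) * d j) k
    have hR : eB.repr (ν • vv) k = ν * (α : F) ^ (k : ℕ) := by
      have h1 : ν • vv = ∑ j : Fin n, (ν * (α : F) ^ (j : ℕ)) • e j := by
        rw [hvv, Finset.smul_sum]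
        apply Finset.sum_congr rfl
        intro j _
        rw [smul_smul]
      rw [h1, hrepr_sum (fun j => ν * (α : F) ^ (j : ℕ)) k]
    rw [hν] at hR
    rw [hL] at hR
    exact hR
  have hμν : μ = ν := by
    have h1 := hvrel j0
    rw [hdμ j0] at h1
    simpa [hj0] using h1
  have hσα : g.right (α : F) = (α : F) := by
    have h1 := hvrel j1
    rw [hdμ j1, ← hμν] at h1
    have h2 : ((j1 : Fin n) : ℕ) = 1 := rfl
    rw [h2, pow_one] at h1
    have h3 : g.right (α : F) * μ = (α : F) * μ := by rw [h1, mul_comm]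
    exact mul_right_cancel₀ hμ0 h3
  -- the field automorphism is trivial
  have hσ1 : g.right = 1 := by
    apply RingEquiv.ext
    intro x
    show g.right x = x
    rcases eq_or_ne x 0 with rfl | hx
    · simp
    · obtain ⟨k, hk⟩ := hα (Units.mk0 x hx)
      have hk' : (α : Fˣ) ^ k = Units.mk0 x hx := hk
      have hxval : x = ((α : F)) ^ k := by
        rw [← Units.val_zpow_eq_zpow_val, hk']
        rfl
      rw [hxval, map_zpow₀, hσα]
  have hgam : ∀ v : Fin n → F, gamAct g v = (g.left : Matrix (Fin n) (Fin n) F) *ᵥ v := by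
    intro v
    show (g.left : Matrix (Fin n) (Fin n) F) *ᵥ (fun i => g.right (v i)) = _
    rw [hσ1]
    rfl
  -- the matrix is scalar
  have hMv : ∀ v : Fin n → F, (g.left : Matrix (Fin n) (Fin n) F) *ᵥ v = μ • v := by
    intro v
    have h1 : v = ∑ j : Fin n, eB.repr v j • eB j := (eB.sum_repr v).symm
    conv_lhs => rw [h1]
    conv_rhs => rw [h1]
    rw [show (g.left : Matrix (Fin n) (Fin n) F) *ᵥ (∑ j : Fin n, eB.repr v j • eB j)
        = ∑ j : Fin n, eB.repr v j • ((g.left : Matrix (Fin n) (Fin n) F) *ᵥ eB j) by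
      rw [← Matrix.mulVecLin_apply, map_sum]
      apply Finset.sum_congr rfl
      intro j _
      rw [_root_.map_smul, Matrix.mulVecLin_apply]]
    rw [Finset.smul_sum]
    apply Finset.sum_congr rfl
    intro j _
    rw [heB, ← hgam, hgej j, hdμ j, smul_smul, smul_smul, mul_comm]
  have hMs : (g.left : Matrix (Fin n) (Fin n) F) = Matrix.scalar (Fin n) μ := by
    ext i k
    have h1 := congrFun (hMv (Pi.single k 1)) i
    rw [Matrix.mulVec_single] at h1
    simp only [MulOpposite.op_one, one_smul, Matrix.col_apply] at h1
    rw [h1, Matrix.scalar_apply, Matrix.diagonal_apply]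
    rcases eq_or_ne i k with rfl | hik
    · simp
    · simp [Pi.single_apply, hik, Ne.symm hik]
  -- conclusion
  refine ⟨(Units.map ((Matrix.scalar (Fin n) : F →+* Matrix (Fin n) (Fin n) F)).toMonoidHom)
      (Units.mk0 μ hμ0), ⟨Units.mk0 μ hμ0, rfl⟩, ?_⟩
  apply SemidirectProduct.ext
  · rw [SemidirectProduct.left_inl]
    apply Units.ext
    show ((Matrix.scalar (Fin n) : F →+* Matrix (Fin n) (Fin n) F)) ((Units.mk0 μ hμ0 : Fˣ) : F)
        = (g.left : Matrix (Fin n) (Fin n) F)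
    rw [hMs]
    rfl
  · rw [SemidirectProduct.right_inl]
    exact hσ1.symm
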